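/- arXiv:2412.20260 — 2 statements merged into one kernel-verified Lean document; each statement's English description precedes it below -/
import Mathlib

section
/- Given pairings τ₁ on X ⊔ Y and τ₂ on Y ⊔ Z (X, Y, Z finite sets), the equivalence relation on X ⊔ Y ⊔ Z generated by τ₁ and τ₂ has the property that every equivalence class contains exactly zero or two elements of X ⊔ Z; the classes containing two elements of X ⊔ Z define a pairing on X ⊔ Z. -/
section
variable {X Y Z : Type*}

/-- The one-step relation on `X ⊕ (Y ⊕ Z)` generated by a pairing `τ₁` on `X ⊕ Y` and a
pairing `τ₂` on `Y ⊕ Z` (regarded via the inclusions into `X ⊕ (Y ⊕ Z)`):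
`a ~ τ₁(a)` and `b ~ τ₂(b)`. -/
def pairingStep (τ₁ : X ⊕ Y → X ⊕ Y) (τ₂ : Y ⊕ Z → Y ⊕ Z)
    (a b : X ⊕ (Y ⊕ Z)) : Prop :=
  (∃ u : X ⊕ Y, (Sum.map id Sum.inl u : X ⊕ (Y ⊕ Z)) = a ∧
      (Sum.map id Sum.inl (τ₁ u) : X ⊕ (Y ⊕ Z)) = b) ∨
  (∃ v : Y ⊕ Z, (Sum.inr v : X ⊕ (Y ⊕ Z)) = a ∧ (Sum.inr (τ₂ v) : X ⊕ (Y ⊕ Z)) = b)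

/-- The embedding of `X ⊕ Z` into `X ⊕ (Y ⊕ Z)`. -/
def outerEmb (x : X ⊕ Z) : X ⊕ (Y ⊕ Z) := Sum.map id Sum.inr x

namespace PairingAux
set_option linter.unusedSectionVars false

/-- State space for the alternating walk. -/
abbrev S (X Y Z : Type*) := (X ⊕ Z) ⊕ (Y × Bool)

def Ffun (τ₁ : X ⊕ Y → X ⊕ Y) (τ₂ : Y ⊕ Z → Y ⊕ Z) : S X Y Z → S X Y Z
  | .inl (.inl x) => match τ₁ (.inl x) with
      | .inl x' => .inl (.inl x')
      | .inr y => .inr (y, false)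
  | .inl (.inr z) => match τ₂ (.inr z) with
      | .inr z' => .inl (.inr z')
      | .inl y => .inr (y, true)
  | .inr (y, false) => match τ₂ (.inl y) with
      | .inr z => .inl (.inr z)
      | .inl y' => .inr (y', true)
  | .inr (y, true) => match τ₁ (.inr y) with
      | .inl x => .inl (.inl x)
      | .inr y' => .inr (y', false)

def Rfun : S X Y Z → S X Y Z
  | .inl v => .inl v
  | .inr (y, b) => .inr (y, !b)

variable (τ₁ : X ⊕ Y → X ⊕ Y) (τ₂ : Y ⊕ Z → Y ⊕ Z)

lemma R_R : ∀ s : S X Y Z, Rfun (Rfun s) = s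
  | .inl _ => rfl
  | .inr (_, b) => by cases b <;> rfl

lemma FRFR (h₁ : Function.Involutive τ₁) (h₂ : Function.Involutive τ₂) :
    ∀ s : S X Y Z, Ffun τ₁ τ₂ (Rfun (Ffun τ₁ τ₂ (Rfun s))) = s := by
  intro s
  rcases s with (x | z) | ⟨y, b⟩
  · rcases h : τ₁ (.inl x) with x' | y
    · have h' : τ₁ (.inl x') = .inl x := by rw [← h, h₁]
      simp [Ffun, Rfun, h, h']
    · have h' : τ₁ (.inr y) = .inl x := by rw [← h, h₁]
      simp [Ffun, Rfun, h, h']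
  · rcases h : τ₂ (.inr z) with y | z'
    · have h' : τ₂ (.inl y) = .inr z := by rw [← h, h₂]
      simp [Ffun, Rfun, h, h']
    · have h' : τ₂ (.inr z') = .inr z := by rw [← h, h₂]
      simp [Ffun, Rfun, h, h']
  · cases b
    · rcases h : τ₁ (.inr y) with x | y'
      · have h' : τ₁ (.inl x) = .inr y := by rw [← h, h₁]
        simp [Ffun, Rfun, h, h']
      · have h' : τ₁ (.inr y') = .inr y := by rw [← h, h₁]
        simp [Ffun, Rfun, h, h']
    · rcases h : τ₂ (.inl y) with y' | z
      · have h' : τ₂ (.inl y') = .inl y := by rw [← h, h₂]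
        simp [Ffun, Rfun, h, h']
      · have h' : τ₂ (.inr z) = .inl y := by rw [← h, h₂]
        simp [Ffun, Rfun, h, h']


variable (h₁ : Function.Involutive τ₁) (h₂ : Function.Involutive τ₂)

/-- The walk as a permutation. -/
def Fe : Equiv.Perm (S X Y Z) where
  toFun := Ffun τ₁ τ₂
  invFun := fun s => Rfun (Ffun τ₁ τ₂ (Rfun s))
  left_inv := fun s => by
    have h := FRFR τ₁ τ₂ h₁ h₂ (Rfun s)
    rw [R_R] at h
    have h' := congrArg Rfun h
    rwa [R_R] at h'
  right_inv := fun s => FRFR τ₁ τ₂ h₁ h₂ s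


lemma Fe_R (s : S X Y Z) :
    Fe τ₁ τ₂ h₁ h₂ (Rfun s) = Rfun ((Fe τ₁ τ₂ h₁ h₂)⁻¹ s) := by
  show Ffun τ₁ τ₂ (Rfun s) = Rfun (Rfun (Ffun τ₁ τ₂ (Rfun s)))
  rw [R_R]

lemma rev (n : ℕ) (s : S X Y Z) :
    ((Fe τ₁ τ₂ h₁ h₂) ^ n) (Rfun s) = Rfun (((Fe τ₁ τ₂ h₁ h₂)⁻¹ ^ n) s) := by
  induction n generalizing s with
  | zero => simp
  | succ n ih =>
    rw [pow_succ, Equiv.Perm.mul_apply, Fe_R, ih, pow_succ, Equiv.Perm.mul_apply]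

lemma inv_pow_apply {j k : ℕ} (hj : j ≤ k) (s : S X Y Z) :
    (((Fe τ₁ τ₂ h₁ h₂)⁻¹) ^ j) (((Fe τ₁ τ₂ h₁ h₂) ^ k) s) =
      ((Fe τ₁ τ₂ h₁ h₂) ^ (k - j)) s := by
  set G := Fe τ₁ τ₂ h₁ h₂ with hG
  have h1 : (G ^ j) ((G⁻¹ ^ j) ((G ^ k) s)) = (G ^ k) s := by
    rw [inv_pow]; exact (G ^ j).apply_symm_apply _
  have h2 : (G ^ j) ((G ^ (k - j)) s) = (G ^ k) s := by
    rw [← Equiv.Perm.mul_apply, ← pow_add, Nat.add_sub_cancel' hj]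
  exact (G ^ j).injective (h1.trans h2.symm)

lemma F_ne_R (h₁' : ∀ a, τ₁ a ≠ a) (h₂' : ∀ a, τ₂ a ≠ a) :
    ∀ s : S X Y Z, Ffun τ₁ τ₂ s ≠ Rfun s := by
  intro s heq
  rcases s with (x | z) | ⟨y, b⟩
  · rcases h : τ₁ (.inl x) with x' | y <;> simp [Ffun, Rfun, h] at heq
    rw [heq] at h; exact h₁' _ h
  · rcases h : τ₂ (.inr z) with y | z' <;> simp [Ffun, Rfun, h] at heq
    rw [heq] at h; exact h₂' _ h
  · cases b
    · rcases h : τ₂ (.inl y) with y' | z <;> simp [Ffun, Rfun, h] at heq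
      rw [heq] at h; exact h₂' _ h
    · rcases h : τ₁ (.inr y) with x | y' <;> simp [Ffun, Rfun, h] at heq
      rw [heq] at h; exact h₁' _ h

lemma noSelfReturn (h₁' : ∀ a, τ₁ a ≠ a) (h₂' : ∀ a, τ₂ a ≠ a)
    (k : ℕ) (v : X ⊕ Z) (hk : 0 < k)
    (hret : ((Fe τ₁ τ₂ h₁ h₂) ^ k) (.inl v) = .inl v)
    (hinner : ∀ j, 0 < j → j < k → ¬ (((Fe τ₁ τ₂ h₁ h₂) ^ j) (.inl v)).isLeft) :
    False := by
  set G := Fe τ₁ τ₂ h₁ h₂ with hG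
  have palin : ∀ j, j ≤ k → Rfun ((G ^ j) (.inl v)) = (G ^ (k - j)) (.inl v) := by
    intro j hj
    have h0 : (G ^ j) (Rfun (.inl v)) = Rfun ((G⁻¹ ^ j) (.inl v)) := rev τ₁ τ₂ h₁ h₂ j _
    have h1 : Rfun (.inl v : S X Y Z) = .inl v := rfl
    rw [h1] at h0
    have h2 := congrArg Rfun h0
    rw [R_R] at h2
    have h3 : (G⁻¹ ^ j) (.inl v : S X Y Z) = (G ^ (k - j)) (.inl v) := by
      conv_lhs => rw [← hret]
      exact inv_pow_apply τ₁ τ₂ h₁ h₂ hj _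
    rw [h2, h3]
  rcases Nat.even_or_odd k with ⟨m, hm⟩ | ⟨m, hm⟩
  · have hm1 : 0 < m := by omega
    have hmk : m < k := by omega
    have := palin m (by omega)
    have hkm : k - m = m := by omega
    rw [hkm] at this
    rcases hsm : (G ^ m) (.inl v : S X Y Z) with v' | ⟨y, b⟩
    · exact hinner m hm1 hmk (by rw [hsm]; rfl)
    · rw [hsm] at this
      simp [Rfun] at this
  · have := palin m (by omega)
    have hkm : k - m = m + 1 := by omega
    rw [hkm] at this
    have hstep : (G ^ (m + 1)) (.inl v : S X Y Z) = G ((G ^ m) (.inl v)) := by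
      rw [pow_succ', Equiv.Perm.mul_apply]
    rw [hstep] at this
    exact F_ne_R τ₁ τ₂ h₁' h₂' _ this.symm

variable [Finite X] [Finite Y] [Finite Z]

lemma exists_ret (v : X ⊕ Z) :
    ∃ k, 0 < k ∧ (((Fe τ₁ τ₂ h₁ h₂) ^ k) (.inl v)).isLeft := by
  refine ⟨orderOf (Fe τ₁ τ₂ h₁ h₂), orderOf_pos _, ?_⟩
  rw [pow_orderOf_eq_one]
  rfl

/-- first return time -/
def retTime (v : X ⊕ Z) : ℕ := Nat.find (exists_ret τ₁ τ₂ h₁ h₂ v)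

lemma retTime_pos (v : X ⊕ Z) : 0 < retTime τ₁ τ₂ h₁ h₂ v :=
  (Nat.find_spec (exists_ret τ₁ τ₂ h₁ h₂ v)).1

lemma retTime_isLeft (v : X ⊕ Z) :
    (((Fe τ₁ τ₂ h₁ h₂) ^ (retTime τ₁ τ₂ h₁ h₂ v)) (.inl v)).isLeft :=
  (Nat.find_spec (exists_ret τ₁ τ₂ h₁ h₂ v)).2

/-- the partner -/
def partner (v : X ⊕ Z) : X ⊕ Z :=
  Sum.elim id (fun _ => v) (((Fe τ₁ τ₂ h₁ h₂) ^ (retTime τ₁ τ₂ h₁ h₂ v)) (.inl v))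

lemma ret_spec (v : X ⊕ Z) :
    ((Fe τ₁ τ₂ h₁ h₂) ^ (retTime τ₁ τ₂ h₁ h₂ v)) (.inl v) = .inl (partner τ₁ τ₂ h₁ h₂ v) := by
  obtain ⟨w, hw⟩ := Sum.isLeft_iff.mp (retTime_isLeft τ₁ τ₂ h₁ h₂ v)
  rw [hw]
  unfold partner
  rw [hw]
  rfl

lemma retTime_min (v : X ⊕ Z) :
    ∀ j, 0 < j → j < retTime τ₁ τ₂ h₁ h₂ v →
      ¬ (((Fe τ₁ τ₂ h₁ h₂) ^ j) (.inl v)).isLeft := by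
  intro j hj hjlt hleft
  exact Nat.find_min (exists_ret τ₁ τ₂ h₁ h₂ v) hjlt ⟨hj, hleft⟩

lemma partner_ne (h₁' : ∀ a, τ₁ a ≠ a) (h₂' : ∀ a, τ₂ a ≠ a) (v : X ⊕ Z) :
    partner τ₁ τ₂ h₁ h₂ v ≠ v := by
  intro hpe
  refine noSelfReturn τ₁ τ₂ h₁ h₂ h₁' h₂' (retTime τ₁ τ₂ h₁ h₂ v) v
    (retTime_pos τ₁ τ₂ h₁ h₂ v) ?_ (retTime_min τ₁ τ₂ h₁ h₂ v)
  rw [ret_spec, hpe]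

lemma walk_back (v : X ⊕ Z) :
    ∀ j, j ≤ retTime τ₁ τ₂ h₁ h₂ v →
      ((Fe τ₁ τ₂ h₁ h₂) ^ j) (.inl (partner τ₁ τ₂ h₁ h₂ v)) =
        Rfun (((Fe τ₁ τ₂ h₁ h₂) ^ (retTime τ₁ τ₂ h₁ h₂ v - j)) (.inl v)) := by
  intro j hj
  have h0 : ((Fe τ₁ τ₂ h₁ h₂) ^ j) (Rfun (.inl (partner τ₁ τ₂ h₁ h₂ v))) =
      Rfun (((Fe τ₁ τ₂ h₁ h₂)⁻¹ ^ j) (.inl (partner τ₁ τ₂ h₁ h₂ v))) := rev τ₁ τ₂ h₁ h₂ j _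
  have h1 : Rfun (.inl (partner τ₁ τ₂ h₁ h₂ v) : S X Y Z) = .inl (partner τ₁ τ₂ h₁ h₂ v) := rfl
  rw [h1] at h0
  rw [h0, ← ret_spec, inv_pow_apply τ₁ τ₂ h₁ h₂ hj]

lemma retTime_partner (v : X ⊕ Z) :
    retTime τ₁ τ₂ h₁ h₂ (partner τ₁ τ₂ h₁ h₂ v) = retTime τ₁ τ₂ h₁ h₂ v := by
  set k := retTime τ₁ τ₂ h₁ h₂ v with hk
  have hback : ((Fe τ₁ τ₂ h₁ h₂) ^ k) (.inl (partner τ₁ τ₂ h₁ h₂ v)) = .inl v := by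
    rw [walk_back τ₁ τ₂ h₁ h₂ v k le_rfl, Nat.sub_self, pow_zero]
    rfl
  apply le_antisymm
  · exact Nat.find_le ⟨retTime_pos τ₁ τ₂ h₁ h₂ v, by rw [hback]; rfl⟩
  · by_contra hlt
    push_neg at hlt
    set j := retTime τ₁ τ₂ h₁ h₂ (partner τ₁ τ₂ h₁ h₂ v) with hj
    have hj0 : 0 < j := retTime_pos τ₁ τ₂ h₁ h₂ _
    have hwb := walk_back τ₁ τ₂ h₁ h₂ v j (le_of_lt hlt)
    have hL := retTime_isLeft τ₁ τ₂ h₁ h₂ (partner τ₁ τ₂ h₁ h₂ v)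
    rw [← hj, hwb] at hL
    have hnotL := retTime_min τ₁ τ₂ h₁ h₂ v (k - j) (by omega) (by omega)
    rcases hs : ((Fe τ₁ τ₂ h₁ h₂) ^ (k - j)) (.inl v : S X Y Z) with v' | ⟨y, b⟩
    · exact hnotL (by rw [hs]; rfl)
    · rw [hs] at hL
      simp [Rfun] at hL

lemma partner_partner (v : X ⊕ Z) :
    partner τ₁ τ₂ h₁ h₂ (partner τ₁ τ₂ h₁ h₂ v) = v := by
  have h := ret_spec τ₁ τ₂ h₁ h₂ (partner τ₁ τ₂ h₁ h₂ v)
  rw [retTime_partner] at h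
  rw [walk_back τ₁ τ₂ h₁ h₂ v _ le_rfl, Nat.sub_self, pow_zero] at h
  have : (Rfun ((1 : Equiv.Perm (S X Y Z)) (.inl v))) = (.inl v : S X Y Z) := rfl
  rw [this] at h
  exact (Sum.inl.injEq _ _).mp h.symm

lemma reach_eq (m : ℕ) (v w : X ⊕ Z)
    (h : ((Fe τ₁ τ₂ h₁ h₂) ^ m) (.inl v) = .inl w) :
    w = v ∨ w = partner τ₁ τ₂ h₁ h₂ v := by
  induction m using Nat.strong_induction_on generalizing v w with
  | _ m ih =>
    rcases Nat.eq_zero_or_pos m with rfl | hm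
    · left
      rw [pow_zero] at h
      exact ((Sum.inl.injEq _ _).mp h).symm
    · set k := retTime τ₁ τ₂ h₁ h₂ v with hk
      have hmk : k ≤ m := by
        by_contra hlt
        push_neg at hlt
        exact retTime_min τ₁ τ₂ h₁ h₂ v m hm hlt (by rw [h]; rfl)
      have hstep : ((Fe τ₁ τ₂ h₁ h₂) ^ (m - k)) (.inl (partner τ₁ τ₂ h₁ h₂ v)) = .inl w := by
        rw [← ret_spec, ← Equiv.Perm.mul_apply, ← pow_add, Nat.sub_add_cancel hmk, h]
      have hk0 : 0 < k := retTime_pos τ₁ τ₂ h₁ h₂ v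
      rcases ih (m - k) (by omega) _ _ hstep with h' | h'
      · right; exact h'
      · left; rw [h', partner_partner]


def proj : S X Y Z → X ⊕ (Y ⊕ Z)
  | .inl (.inl x) => .inl x
  | .inl (.inr z) => .inr (.inr z)
  | .inr (y, _) => .inr (.inl y)

lemma proj_inl (v : X ⊕ Z) : proj (.inl v : S X Y Z) = outerEmb v := by
  cases v <;> rfl

lemma step_forward (s : S X Y Z) :
    pairingStep τ₁ τ₂ (proj s) (proj (Ffun τ₁ τ₂ s)) := by
  rcases s with (x | z) | ⟨y, b⟩
  · exact Or.inl ⟨.inl x, rfl, by rcases h : τ₁ (.inl x) with x' | y <;> simp [Ffun, proj, h]⟩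
  · exact Or.inr ⟨.inr z, rfl, by rcases h : τ₂ (.inr z) with y | z' <;> simp [Ffun, proj, h]⟩
  · cases b
    · exact Or.inr ⟨.inl y, rfl, by
        rcases h : τ₂ (.inl y) with y' | z <;> simp [Ffun, proj, h]⟩
    · exact Or.inl ⟨.inr y, rfl, by
        rcases h : τ₁ (.inr y) with x | y' <;> simp [Ffun, proj, h]⟩

lemma chain (n : ℕ) (s : S X Y Z) :
    Relation.EqvGen (pairingStep τ₁ τ₂) (proj s) (proj (((Fe τ₁ τ₂ h₁ h₂) ^ n) s)) := by
  induction n generalizing s with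
  | zero => rw [pow_zero]; exact Relation.EqvGen.refl _
  | succ n ih =>
    rw [pow_succ, Equiv.Perm.mul_apply]
    exact Relation.EqvGen.trans _ _ _
      (Relation.EqvGen.rel _ _ (step_forward τ₁ τ₂ s))
      (ih (Fe τ₁ τ₂ h₁ h₂ s))

lemma step_backward {a b : X ⊕ (Y ⊕ Z)} (h : pairingStep τ₁ τ₂ a b) :
    ∃ s : S X Y Z, proj s = a ∧ proj (Ffun τ₁ τ₂ s) = b := by
  rcases h with ⟨u, rfl, rfl⟩ | ⟨u, rfl, rfl⟩
  · rcases u with x | y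
    · exact ⟨.inl (.inl x), rfl, by rcases h : τ₁ (.inl x) with x' | y <;> simp [Ffun, proj, h]⟩
    · exact ⟨.inr (y, true), rfl, by rcases h : τ₁ (.inr y) with x | y' <;> simp [Ffun, proj, h]⟩
  · rcases u with y | z
    · exact ⟨.inr (y, false), rfl, by
        rcases h : τ₂ (.inl y) with y' | z <;> simp [Ffun, proj, h]⟩
    · exact ⟨.inl (.inr z), rfl, by
        rcases h : τ₂ (.inr z) with y | z' <;> simp [Ffun, proj, h]⟩

lemma proj_surj (a : X ⊕ (Y ⊕ Z)) : ∃ s : S X Y Z, proj s = a := by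
  rcases a with x | (y | z)
  · exact ⟨.inl (.inl x), rfl⟩
  · exact ⟨.inr (y, false), rfl⟩
  · exact ⟨.inl (.inr z), rfl⟩

lemma proj_fiber {t t' : S X Y Z} (h : proj t' = proj t) : t' = t ∨ t' = Rfun t := by
  rcases t with (x | z) | ⟨y, b⟩ <;> rcases t' with (x' | z') | ⟨y', b'⟩ <;>
    simp_all [proj, Rfun]
  · rcases b with _ | _ <;> rcases b' with _ | _ <;> simp_all

lemma inl_fiber {s : S X Y Z} {v : X ⊕ Z} (h : proj s = outerEmb v) : s = .inl v := by
  rcases s with (x | z) | ⟨y, b⟩ <;> rcases v with x' | z' <;> simp_all [proj, outerEmb]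

lemma pow_inv_pow (n : ℕ) (s : S X Y Z) :
    ((Fe τ₁ τ₂ h₁ h₂) ^ n) (((Fe τ₁ τ₂ h₁ h₂)⁻¹ ^ n) s) = s := by
  rw [inv_pow]; exact ((Fe τ₁ τ₂ h₁ h₂) ^ n).apply_symm_apply s

lemma rev' (n : ℕ) (s : S X Y Z) :
    Rfun (((Fe τ₁ τ₂ h₁ h₂) ^ n) s) = ((Fe τ₁ τ₂ h₁ h₂)⁻¹ ^ n) (Rfun s) := by
  have h := rev τ₁ τ₂ h₁ h₂ n (Rfun s)
  rw [R_R] at h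
  have h2 := congrArg Rfun h
  rwa [R_R] at h2



lemma natInv (n : ℕ) : ∃ m : ℕ, ∀ s : S X Y Z,
    ((Fe τ₁ τ₂ h₁ h₂) ^ m) (((Fe τ₁ τ₂ h₁ h₂) ^ n) s) = s := by
  obtain ⟨N', hN⟩ : ∃ N', orderOf (Fe τ₁ τ₂ h₁ h₂) = N' + 1 :=
    ⟨orderOf (Fe τ₁ τ₂ h₁ h₂) - 1, by have := orderOf_pos (Fe τ₁ τ₂ h₁ h₂); omega⟩
  refine ⟨n * N', fun s => ?_⟩
  rw [← Equiv.Perm.mul_apply, ← pow_add]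
  have he : n * N' + n = orderOf (Fe τ₁ τ₂ h₁ h₂) * n := by rw [hN]; ring
  rw [he, pow_mul, pow_orderOf_eq_one, one_pow]
  rfl

/-- "same cycle up to reversal" relation on states -/
def rrel (s t : S X Y Z) : Prop :=
  ∃ n : ℕ, ((Fe τ₁ τ₂ h₁ h₂) ^ n) s = t ∨ ((Fe τ₁ τ₂ h₁ h₂) ^ n) s = Rfun t

lemma rrel_refl (s : S X Y Z) : rrel τ₁ τ₂ h₁ h₂ s s := ⟨0, Or.inl (by simp)⟩

lemma rrel_R (s : S X Y Z) : rrel τ₁ τ₂ h₁ h₂ s (Rfun s) := ⟨0, Or.inr (by simp [R_R])⟩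

lemma rrel_symm {s t : S X Y Z} (h : rrel τ₁ τ₂ h₁ h₂ s t) : rrel τ₁ τ₂ h₁ h₂ t s := by
  obtain ⟨n, hn | hn⟩ := h
  · obtain ⟨m, hm⟩ := natInv τ₁ τ₂ h₁ h₂ n
    exact ⟨m, Or.inl (by rw [← hn, hm])⟩
  · have ht : t = ((Fe τ₁ τ₂ h₁ h₂)⁻¹ ^ n) (Rfun s) := by
      have := congrArg Rfun hn
      rw [R_R, rev' τ₁ τ₂ h₁ h₂] at this
      exact this.symm
    refine ⟨n, Or.inr ?_⟩
    rw [ht, pow_inv_pow]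

lemma rrel_trans {s t u : S X Y Z} (hst : rrel τ₁ τ₂ h₁ h₂ s t)
    (htu : rrel τ₁ τ₂ h₁ h₂ t u) : rrel τ₁ τ₂ h₁ h₂ s u := by
  obtain ⟨n, hn⟩ := hst
  obtain ⟨m, hm⟩ := htu
  rcases hn with hn | hn
  · rcases hm with hm | hm
    · exact ⟨m + n, Or.inl (by rw [pow_add, Equiv.Perm.mul_apply, hn, hm])⟩
    · exact ⟨m + n, Or.inr (by rw [pow_add, Equiv.Perm.mul_apply, hn, hm])⟩
  · -- (Fe^n) s = Rfun t
    have ht : ((Fe τ₁ τ₂ h₁ h₂) ^ m) t =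
        Rfun (((Fe τ₁ τ₂ h₁ h₂)⁻¹ ^ m) (((Fe τ₁ τ₂ h₁ h₂) ^ n) s)) := by
      have h1 : t = Rfun (((Fe τ₁ τ₂ h₁ h₂) ^ n) s) := by
        have := congrArg Rfun hn; rw [R_R] at this; exact this.symm
      rw [h1, rev τ₁ τ₂ h₁ h₂]
    obtain ⟨c, hc⟩ := natInv τ₁ τ₂ h₁ h₂ m
    rcases hm with hm | hm
    · -- Fe^m t = u
      have hu : Rfun u = ((Fe τ₁ τ₂ h₁ h₂)⁻¹ ^ m) (((Fe τ₁ τ₂ h₁ h₂) ^ n) s) := by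
        rw [← hm, ht, R_R]
      have : ((Fe τ₁ τ₂ h₁ h₂) ^ m) (Rfun u) = ((Fe τ₁ τ₂ h₁ h₂) ^ n) s := by
        rw [hu, pow_inv_pow]
      refine ⟨c + n, Or.inr ?_⟩
      rw [pow_add, Equiv.Perm.mul_apply, ← this, hc]
    · -- Fe^m t = Rfun u
      have hu : u = ((Fe τ₁ τ₂ h₁ h₂)⁻¹ ^ m) (((Fe τ₁ τ₂ h₁ h₂) ^ n) s) := by
        rw [← R_R (s := u), ← hm, ht, R_R]
      have : ((Fe τ₁ τ₂ h₁ h₂) ^ m) u = ((Fe τ₁ τ₂ h₁ h₂) ^ n) s := by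
        rw [hu, pow_inv_pow]
      refine ⟨c + n, Or.inl ?_⟩
      rw [pow_add, Equiv.Perm.mul_apply, ← this, hc]

lemma eqvgen_to_rrel {a b : X ⊕ (Y ⊕ Z)}
    (h : Relation.EqvGen (pairingStep τ₁ τ₂) a b) :
    ∃ s t : S X Y Z, proj s = a ∧ proj t = b ∧ rrel τ₁ τ₂ h₁ h₂ s t := by
  induction h with
  | rel a b hab =>
    obtain ⟨s, hs, hFs⟩ := step_backward τ₁ τ₂ hab
    exact ⟨s, Ffun τ₁ τ₂ s, hs, hFs, ⟨1, Or.inl (by rw [pow_one]; rfl)⟩⟩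
  | refl a =>
    obtain ⟨s, hs⟩ := proj_surj a
    exact ⟨s, s, hs, hs, rrel_refl τ₁ τ₂ h₁ h₂ s⟩
  | symm a b _ ih =>
    obtain ⟨s, t, hs, ht, hr⟩ := ih
    exact ⟨t, s, ht, hs, rrel_symm τ₁ τ₂ h₁ h₂ hr⟩
  | trans a b c _ _ ih₁ ih₂ =>
    obtain ⟨s, t, hs, ht, hr⟩ := ih₁
    obtain ⟨s', t', hs', ht', hr'⟩ := ih₂
    have hfib : s' = t ∨ s' = Rfun t := proj_fiber (by rw [hs', ht])
    have hts' : rrel τ₁ τ₂ h₁ h₂ t s' := by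
      rcases hfib with h | h
      · rw [h]; exact rrel_refl τ₁ τ₂ h₁ h₂ t
      · rw [h]; exact rrel_R τ₁ τ₂ h₁ h₂ t
    exact ⟨s, t', hs, ht',
      rrel_trans τ₁ τ₂ h₁ h₂ (rrel_trans τ₁ τ₂ h₁ h₂ hr hts') hr'⟩

lemma partner_eqvgen (v : X ⊕ Z) :
    Relation.EqvGen (pairingStep τ₁ τ₂) (outerEmb v)
      (outerEmb (partner τ₁ τ₂ h₁ h₂ v)) := by
  have h := chain τ₁ τ₂ h₁ h₂ (retTime τ₁ τ₂ h₁ h₂ v) (.inl v)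
  rwa [ret_spec, proj_inl, proj_inl] at h

lemma eqvgen_uniq {v w : X ⊕ Z}
    (h : Relation.EqvGen (pairingStep τ₁ τ₂) (outerEmb v) (outerEmb w)) :
    w = v ∨ w = partner τ₁ τ₂ h₁ h₂ v := by
  obtain ⟨s, t, hs, ht, n, hr⟩ := eqvgen_to_rrel τ₁ τ₂ h₁ h₂ h
  have hsv : s = .inl v := inl_fiber hs
  have htw : t = .inl w := inl_fiber ht
  subst hsv htw
  have hreach : ((Fe τ₁ τ₂ h₁ h₂) ^ n) (.inl v : S X Y Z) = .inl w := by
    rcases hr with hr | hr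
    · exact hr
    · exact hr
  exact reach_eq τ₁ τ₂ h₁ h₂ n v w hreach

end PairingAux

/-- Given pairings (fixed-point-free involutions) `τ₁` on `X ⊕ Y` and `τ₂`
on `Y ⊕ Z` (with `X`, `Y`, `Z` finite), the equivalence relation on `X ⊕ Y ⊕ Z` generated by
`τ₁` and `τ₂` has the property that every equivalence class contains exactly zero or two
elements of `X ⊕ Z` (every element of `X ⊕ Z` has a unique distinct partner in `X ⊕ Z` in its
class); the classes containing two elements of `X ⊕ Z` define a pairing on `X ⊕ Z`. -/
theorem pairing_composition {X Y Z : Type*} [Finite X] [Finite Y] [Finite Z]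
    (τ₁ : X ⊕ Y → X ⊕ Y) (h₁ : Function.Involutive τ₁) (h₁' : ∀ a, τ₁ a ≠ a)
    (τ₂ : Y ⊕ Z → Y ⊕ Z) (h₂ : Function.Involutive τ₂) (h₂' : ∀ a, τ₂ a ≠ a) :
    (∀ x : X ⊕ Z, ∃! y : X ⊕ Z, y ≠ x ∧
        Relation.EqvGen (pairingStep τ₁ τ₂) (outerEmb x) (outerEmb y)) ∧
    (∃ τ : X ⊕ Z → X ⊕ Z, Function.Involutive τ ∧ (∀ x, τ x ≠ x) ∧
        ∀ x y : X ⊕ Z, τ x = y ↔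
          (y ≠ x ∧ Relation.EqvGen (pairingStep τ₁ τ₂) (outerEmb x) (outerEmb y))) := by
  constructor
  · intro x
    refine ⟨PairingAux.partner τ₁ τ₂ h₁ h₂ x,
      ⟨PairingAux.partner_ne τ₁ τ₂ h₁ h₂ h₁' h₂' x,
        PairingAux.partner_eqvgen τ₁ τ₂ h₁ h₂ x⟩, ?_⟩
    rintro y ⟨hy, hrel⟩
    rcases PairingAux.eqvgen_uniq τ₁ τ₂ h₁ h₂ hrel with h | h
    · exact absurd h hy
    · exact h
  · refine ⟨PairingAux.partner τ₁ τ₂ h₁ h₂,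
      PairingAux.partner_partner τ₁ τ₂ h₁ h₂,
      PairingAux.partner_ne τ₁ τ₂ h₁ h₂ h₁' h₂', ?_⟩
    intro x y
    constructor
    · rintro rfl
      exact ⟨PairingAux.partner_ne τ₁ τ₂ h₁ h₂ h₁' h₂' x,
        PairingAux.partner_eqvgen τ₁ τ₂ h₁ h₂ x⟩
    · rintro ⟨hy, hrel⟩
      rcases PairingAux.eqvgen_uniq τ₁ τ₂ h₁ h₂ hrel with h | h
      · exact absurd h hy
      · exact h.symm
end
end

section
/- Vertical composition of Brauer diagrams is associative: for Brauer diagrams f : k → l, g : l → m, h : m → n, one has h ∘ (g ∘ f) = (h ∘ g) ∘ f, where the pairing of the composite is the composition pairing and the closed-component counts add according to κ(g∘f) = κ(f) + κ(g) + k(τ_f, τ_g). -/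
/-- A (monochrome) Brauer diagram from `m` to `n`: a pairing (fixed-point-free involution) `τ`
on the disjoint union of an `m`-element source and an `n`-element target set, together with
a natural number `closed` of closed components. -/
structure BrauerDiagram (m n : ℕ) where
  τ : Fin m ⊕ Fin n → Fin m ⊕ Fin n
  invol : Function.Involutive τ
  nofix : ∀ x, τ x ≠ x
  closed : ℕ

namespace BrauerDiagram

variable {k l m n p m₁ n₁ m₂ n₂ : ℕ}

/-- The one-step relation on `Fin l ⊕ (Fin m ⊕ Fin n)` generated by the pairings of
`f : l → m` and `g : m → n` (identifying the target of `f` with the source of `g`). -/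
def step (f : BrauerDiagram l m) (g : BrauerDiagram m n)
    (a b : Fin l ⊕ (Fin m ⊕ Fin n)) : Prop :=
  (∃ x : Fin l ⊕ Fin m,
      (Sum.map id Sum.inl x : Fin l ⊕ (Fin m ⊕ Fin n)) = a ∧
      (Sum.map id Sum.inl (f.τ x) : Fin l ⊕ (Fin m ⊕ Fin n)) = b) ∨
  (∃ y : Fin m ⊕ Fin n,
      (Sum.inr y : Fin l ⊕ (Fin m ⊕ Fin n)) = a ∧
      (Sum.inr (g.τ y) : Fin l ⊕ (Fin m ⊕ Fin n)) = b)

/-- Two points of the composite picture are connected if they are related by the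
equivalence relation generated by the two pairings. -/
def conn (f : BrauerDiagram l m) (g : BrauerDiagram m n) :
    Fin l ⊕ (Fin m ⊕ Fin n) → Fin l ⊕ (Fin m ⊕ Fin n) → Prop :=
  Relation.EqvGen (step f g)

/-- The embedding of the outer boundary into the composite picture. -/
def embO (x : Fin l ⊕ Fin n) : Fin l ⊕ (Fin m ⊕ Fin n) := Sum.map id Sum.inr x

/-- A middle point is closed if it lies on no component meeting the outer boundary. -/
def IsClosedMid (f : BrauerDiagram l m) (g : BrauerDiagram m n) (b : Fin m) : Prop :=
  ∀ z : Fin l ⊕ Fin n, ¬ conn f g (Sum.inr (Sum.inl b)) (embO z)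

/-- The number of closed components formed by the composition of the two pairings:
the number of equivalence classes of closed middle points. -/
noncomputable def newClosed (f : BrauerDiagram l m) (g : BrauerDiagram m n) : ℕ :=
  Nat.card (Quotient (Setoid.comap
    (fun b : {b : Fin m // IsClosedMid f g b} =>
      (Sum.inr (Sum.inl b.1) : Fin l ⊕ (Fin m ⊕ Fin n)))
    (Relation.EqvGen.setoid (step f g))))

/-- `IsComp f g h` says that `h` is the vertical composite `g ∘ f` of the Brauer diagrams
`f : l → m` and `g : m → n`: its pairing matches two outer boundary points exactly when they
are connected through the two pairings, and its number of closed components is the sum of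
those of `f` and of `g` together with the closed components formed by the composition. -/
def IsComp (f : BrauerDiagram l m) (g : BrauerDiagram m n) (h : BrauerDiagram l n) : Prop :=
  (∀ x y : Fin l ⊕ Fin n, h.τ x = y ↔ (y ≠ x ∧ conn f g (embO x) (embO y))) ∧
  h.closed = f.closed + g.closed + newClosed f g

/-- The identity Brauer diagram on `n`, induced by the pairing `sᵢ ↦ tᵢ`. -/
def idBD (n : ℕ) : BrauerDiagram n n where
  τ := Sum.swap
  invol := Sum.swap_swap
  nofix := by intro x; cases x <;> simp
  closed := 0

/-- The open Brauer diagram of a bijection (in particular of a permutation when `m = n`),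
induced by the pairing `sᵢ ↦ t_{σ(i)}`. -/
def permBD (e : Fin m ≃ Fin n) : BrauerDiagram m n where
  τ := Sum.elim (fun i => Sum.inr (e i)) (fun j => Sum.inl (e.symm j))
  invol := by intro x; cases x <;> simp
  nofix := by intro x; cases x <;> simp
  closed := 0

/-- Horizontal (monoidal) sum of Brauer diagrams, given by juxtaposition. -/
def hsum (f : BrauerDiagram m₁ n₁) (g : BrauerDiagram m₂ n₂) :
    BrauerDiagram (m₁ + m₂) (n₁ + n₂) :=
  letI E : ((Fin m₁ ⊕ Fin n₁) ⊕ (Fin m₂ ⊕ Fin n₂)) ≃ (Fin (m₁ + m₂) ⊕ Fin (n₁ + n₂)) :=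
    (Equiv.sumSumSumComm (Fin m₁) (Fin n₁) (Fin m₂) (Fin n₂)).trans
      (Equiv.sumCongr finSumFinEquiv finSumFinEquiv)
  { τ := fun x => E (Sum.map f.τ g.τ (E.symm x))
    invol := by
      intro x
      dsimp only
      rw [Equiv.symm_apply_apply]
      rcases h : E.symm x with a | b
      · simp only [Sum.map_inl, f.invol a]
        rw [← h, Equiv.apply_symm_apply]
      · simp only [Sum.map_inr, g.invol b]
        rw [← h, Equiv.apply_symm_apply]
    nofix := by
      intro x hx
      have h' : Sum.map f.τ g.τ (E.symm x) = E.symm x := by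
        apply E.injective
        rw [hx, Equiv.apply_symm_apply]
      rcases h : E.symm x with a | b
      · rw [h] at h'
        exact f.nofix a (by simpa using h')
      · rw [h] at h'
        exact g.nofix b (by simpa using h')
    closed := f.closed + g.closed }

/-- The cup `∪ : 0 → 2`, induced by the unique pairing on a two-element set. -/
def cup : BrauerDiagram 0 2 where
  τ := Sum.map id (fun j => ⟨1 - j.val, by omega⟩)
  invol := by
    intro x
    rcases x with a | j
    · exact a.elim0
    · simp only [Sum.map_inr, id_eq]
      congr 1
      ext
      simp
      omega
  nofix := by
    intro x
    rcases x with a | j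
    · exact a.elim0
    · simp only [Sum.map_inr, id_eq, ne_eq, Sum.inr.injEq]
      intro h
      have := congrArg Fin.val h
      simp at this
      omega
  closed := 0

/-- The cap `∩ : 2 → 0`, induced by the unique pairing on a two-element set. -/
def cap : BrauerDiagram 2 0 where
  τ := Sum.map (fun j => ⟨1 - j.val, by omega⟩) id
  invol := by
    intro x
    rcases x with j | a
    · simp only [Sum.map_inl, id_eq]
      congr 1
      ext
      simp
      omega
    · exact a.elim0
  nofix := by
    intro x
    rcases x with j | a
    · simp only [Sum.map_inl, id_eq, ne_eq, Sum.inl.injEq]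
      intro h
      have := congrArg Fin.val h
      simp at this
      omega
    · exact a.elim0
  closed := 0

/-- The closed circle `○ = (∅, 1) : 0 → 0`: the empty pairing with one closed component. -/
def circle : BrauerDiagram 0 0 where
  τ := fun x => x
  invol := fun _ => rfl
  nofix := fun x => x.elim (fun a => a.elim0) (fun a => a.elim0)
  closed := 1

/-- A Brauer diagram is downward if it is open and its pairing sends every target element
into the source set. -/
def Downward (f : BrauerDiagram m n) : Prop :=
  f.closed = 0 ∧ ∀ j : Fin n, ∃ i : Fin m, f.τ (Sum.inr j) = Sum.inl i

/-- A Brauer diagram is upward if it is open and its pairing sends every source element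
into the target set. -/
def Upward (f : BrauerDiagram m n) : Prop :=
  f.closed = 0 ∧ ∀ i : Fin m, ∃ j : Fin n, f.τ (Sum.inl i) = Sum.inr j

end BrauerDiagram

open BrauerDiagram

/-!
Draw `f`, `g` and `h` at once on the stacked boundary layers `k, l, m, n` and consider
connectivity `conn3` there. Composing `f` and `g` first hides the layer `l`; since `h` never
touches `l`, connectivity in the picture of `(g ∘ f, h)` is `conn3` restricted to the remaining
layers, and likewise for `(f, h ∘ g)`, where `m` is hidden. Hence both bracketings carry the
pairing that `conn3` induces on the outer layers `k` and `n`.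

The closed components of the stack are its components avoiding `k` and `n`. Those meeting `m`
are the closed components of `(g ∘ f, h)` and the others lie in `l` and are the closed components
of `(f, g)`; splitting instead by whether they meet `l` gives the closed components of
`(f, h ∘ g)` and of `(g, h)`. So both bracketings add the same number of closed components.
-/

namespace Relation

variable {α β : Type*}

theorem EqvGen.lift' {r : α → α → Prop} {p : β → β → Prop} (f : α → β)
    (h : ∀ a b, r a b → EqvGen p (f a) (f b)) {a b : α} (hab : EqvGen r a b) :
    EqvGen p (f a) (f b) :=
  ((EqvGen.is_equivalence p).comap f).eqvGen_iff.1 (EqvGen.mono h _ _ hab)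

theorem eqvGen_map_iff {r : α → α → Prop} {e : α → β} (he : Function.Injective e) {x y : β} :
    EqvGen (Relation.Map r e e) x y ↔ x = y ∨ ∃ a b, e a = x ∧ e b = y ∧ EqvGen r a b := by
  refine ⟨fun hxy => ?_, ?_⟩
  · let Q : β → β → Prop := fun x y => x = y ∨ ∃ a b, e a = x ∧ e b = y ∧ EqvGen r a b
    have hQ : Equivalence Q := by
      refine ⟨fun _ => .inl rfl, ?_, ?_⟩
      · rintro _ _ (rfl | ⟨a, b, rfl, rfl, hab⟩)
        exacts [.inl rfl, .inr ⟨b, a, rfl, rfl, hab.symm⟩]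
      · rintro _ _ _ (rfl | ⟨a, b, rfl, rfl, hab⟩) (rfl | ⟨b', c, hb, rfl, hbc⟩)
        · exact .inl rfl
        · exact .inr ⟨b', c, hb, rfl, hbc⟩
        · exact .inr ⟨a, b, rfl, rfl, hab⟩
        · exact .inr ⟨a, c, rfl, rfl, hab.trans _ _ _ (he hb ▸ hbc)⟩
    exact hQ.eqvGen_iff.1 <| EqvGen.mono
      (fun _ _ ⟨a, b, hab, hx, hy⟩ => .inr ⟨a, b, hx, hy, .rel _ _ hab⟩) _ _ hxy
  · rintro (rfl | ⟨a, b, rfl, rfl, hab⟩)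
    · exact .refl _
    · exact EqvGen.lift' e (fun a b h => .rel _ _ ⟨a, b, h, rfl, rfl⟩) hab

theorem eqvGen_map_apply_iff {r : α → α → Prop} {e : α → β} (he : Function.Injective e)
    {a b : α} : EqvGen (Relation.Map r e e) (e a) (e b) ↔ EqvGen r a b := by
  rw [eqvGen_map_iff he]
  constructor
  · rintro (hab | ⟨a', b', ha, hb, h⟩)
    · exact he hab ▸ .refl _
    · exact he ha ▸ he hb ▸ h
  · exact fun h => .inr ⟨a, b, rfl, rfl, h⟩

section Hiding

/- `e` embeds the points seen by `s`. By `glue`, a detour through `r₁` between two such points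
is already an `s`-connection, which is what lets an `r`-path be read off in `s`. -/

variable {r r₁ : β → β → Prop} {s : α → α → Prop} {e : α → β}

theorem eqvGen_cases_of_split
    (split : ∀ x y, r x y → r₁ x y ∨ ∃ a b, e a = x ∧ e b = y ∧ s a b)
    (glue : ∀ a b, EqvGen r₁ (e a) (e b) → EqvGen s a b) {x y : β} (hxy : EqvGen r x y) :
    EqvGen r₁ x y ∨ ∃ a b, EqvGen r₁ x (e a) ∧ EqvGen s a b ∧ EqvGen r₁ (e b) y := by
  let Q : β → β → Prop := fun x y =>
    EqvGen r₁ x y ∨ ∃ a b, EqvGen r₁ x (e a) ∧ EqvGen s a b ∧ EqvGen r₁ (e b) y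
  have hQ : Equivalence Q := by
    refine ⟨fun _ => .inl (.refl _), ?_, ?_⟩
    · rintro _ _ (h | ⟨a, b, ha, hab, hb⟩)
      exacts [.inl h.symm, .inr ⟨b, a, hb.symm, hab.symm, ha.symm⟩]
    · rintro _ _ _ (h | ⟨a, b, ha, hab, hb⟩) (h' | ⟨c, d, hc, hcd, hd⟩)
      · exact .inl (h.trans _ _ _ h')
      · exact .inr ⟨c, d, h.trans _ _ _ hc, hcd, hd⟩
      · exact .inr ⟨a, b, ha, hab, hb.trans _ _ _ h'⟩
      · exact .inr ⟨a, d, ha,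
          hab.trans _ _ _ ((glue b c (hb.trans _ _ _ hc)).trans _ _ _ hcd), hd⟩
  refine hQ.eqvGen_iff.1 (EqvGen.mono (fun x y hxy => ?_) _ _ hxy)
  rcases split x y hxy with h | ⟨a, b, rfl, rfl, hab⟩
  exacts [.inl (.rel _ _ h), .inr ⟨a, b, .refl _, .rel _ _ hab, .refl _⟩]

theorem eqvGen_apply_iff_of_split (sound : ∀ a b, s a b → EqvGen r (e a) (e b))
    (split : ∀ x y, r x y → r₁ x y ∨ ∃ a b, e a = x ∧ e b = y ∧ s a b)
    (glue : ∀ a b, EqvGen r₁ (e a) (e b) → EqvGen s a b) {a b : α} :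
    EqvGen r (e a) (e b) ↔ EqvGen s a b := by
  refine ⟨fun h => ?_, EqvGen.lift' e sound⟩
  rcases eqvGen_cases_of_split split glue h with h | ⟨a', b', ha, hab, hb⟩
  exacts [glue a b h, ((glue a a' ha).trans _ _ _ hab).trans _ _ _ (glue b' b hb)]

theorem eqvGen_iff_of_isolated {V : β → Prop} (hr₁ : r₁ ≤ r)
    (split : ∀ x y, r x y → r₁ x y ∨ V x ∧ V y) {x : β} (hx : ∀ y, EqvGen r₁ x y → ¬ V y)
    {y : β} : EqvGen r x y ↔ EqvGen r₁ x y := by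
  refine ⟨fun hxy => ?_, EqvGen.mono hr₁ _ _⟩
  suffices ∀ y z, EqvGen r y z → (EqvGen r₁ x y ↔ EqvGen r₁ x z) from
    (this x y hxy).1 (.refl _)
  intro y z hyz
  induction hyz with
  | rel y z hyz =>
    rcases split y z hyz with h | ⟨hy, hz⟩
    · exact ⟨fun hxy => hxy.trans _ _ _ (.rel _ _ h),
        fun hxz => hxz.trans _ _ _ (EqvGen.rel _ _ h).symm⟩
    · exact ⟨fun hxy => (hx y hxy hy).elim, fun hxz => (hx z hxz hz).elim⟩
  | refl => exact .rfl
  | symm _ _ _ ih => exact ih.symm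
  | trans _ _ _ _ _ ih₁ ih₂ => exact ih₁.trans ih₂

end Hiding

end Relation

namespace Set

theorem ncard_diff_union_add_ncard_diff {α : Type*} [Finite α] (s t u : Set α) :
    (s \ (t ∪ u)).ncard + (t \ u).ncard = ((s ∪ t) \ u).ncard := by
  rw [← ncard_union_eq (disjoint_left.2 fun _ hs ht => hs.2 (.inl ht.1))]
  congr 1
  ext
  simp only [mem_union, mem_sdiff]
  tauto

end Set

theorem Setoid.card_quotient_comap_eq_ncard {α β γ : Type*} {s : Setoid β}
    {s' : Setoid γ} {p : α → Prop} {u : Subtype p → β} {v : α → γ} {T : Set (Quotient s')}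
    (hp : ∀ a, p a ↔ Quotient.mk s' (v a) ∉ T)
    (hs : ∀ a b : Subtype p, s (u a) (u b) ↔ s' (v a) (v b)) :
    Nat.card (Quotient (s.comap u)) =
      (Set.range (fun a => Quotient.mk s' (v a)) \ T).ncard := by
  have hrange : Set.range (@Quotient.mk'' _ s' ∘ fun a : {a // p a} => v a) =
      Set.range (fun a => Quotient.mk s' (v a)) \ T := by
    ext C
    constructor
    · rintro ⟨⟨a, ha⟩, rfl⟩
      exact ⟨⟨a, rfl⟩, (hp a).1 ha⟩
    · rintro ⟨⟨a, rfl⟩, hT⟩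
      exact ⟨⟨a, (hp a).2 hT⟩, rfl⟩
  rw [← Nat.card_coe_set_eq, ← hrange, ← Nat.card_congr (Setoid.comapQuotientEquiv _ _)]
  exact Nat.card_congr (Quotient.congr (Equiv.refl _) hs)

namespace BrauerDiagram

open Relation

variable {k l m n : ℕ}

theorem IsComp.eq_or_apply_eq {f : BrauerDiagram k l} {g : BrauerDiagram l m}
    {gf : BrauerDiagram k m} (hgf : IsComp f g gf) {x y : Fin k ⊕ Fin m}
    (hxy : conn f g (embO x) (embO y)) : x = y ∨ gf.τ x = y := by
  by_cases h : x = y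
  exacts [.inl h, .inr ((hgf.1 x y).2 ⟨Ne.symm h, hxy⟩)]

theorem IsComp.τ_eq {f : BrauerDiagram k l} {g : BrauerDiagram l m} {L : BrauerDiagram k m}
    {l' : ℕ} {f' : BrauerDiagram k l'} {g' : BrauerDiagram l' m} {R : BrauerDiagram k m}
    (hL : IsComp f g L) (hR : IsComp f' g' R)
    (hconn : ∀ x y, conn f g (embO x) (embO y) ↔ conn f' g' (embO x) (embO y)) :
    L.τ = R.τ :=
  funext fun x => ((hR.1 x (L.τ x)).2 (by rw [← hconn]; exact (hL.1 x _).1 rfl)).symm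

theorem ext {f g : BrauerDiagram m n} (hτ : f.τ = g.τ) (hclosed : f.closed = g.closed) :
    f = g := by
  cases f
  cases g
  congr

/- The boundary layers of `f : k → l`, `g : l → m` and `h : m → n`, stacked so that all three
diagrams are drawn at once; `skipX` embeds the three layers other than `X`. -/
abbrev Stack (k l m n : ℕ) := Fin k ⊕ (Fin l ⊕ (Fin m ⊕ Fin n))

def skipK : Fin l ⊕ (Fin m ⊕ Fin n) → Stack k l m n := Sum.inr
def skipL : Fin k ⊕ (Fin m ⊕ Fin n) → Stack k l m n := Sum.map id Sum.inr
def skipM : Fin k ⊕ (Fin l ⊕ Fin n) → Stack k l m n := Sum.map id (Sum.map id Sum.inr)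
def skipN : Fin k ⊕ (Fin l ⊕ Fin m) → Stack k l m n := Sum.map id (Sum.map id Sum.inl)
def outer : Fin k ⊕ Fin n → Stack k l m n := Sum.map id (Sum.inr ∘ Sum.inr)
def mid₁ (b : Fin l) : Stack k l m n := skipN (.inr (.inl b))
def mid₂ (c : Fin m) : Stack k l m n := skipK (.inr (.inl c))

theorem skipK_injective : Function.Injective (skipK : _ → Stack k l m n) :=
  Sum.inr_injective

theorem skipL_injective : Function.Injective (skipL : _ → Stack k l m n) :=
  Sum.map_injective.2 ⟨Function.injective_id, Sum.inr_injective⟩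

theorem skipM_injective : Function.Injective (skipM : _ → Stack k l m n) :=
  Sum.map_injective.2 ⟨Function.injective_id,
    Sum.map_injective.2 ⟨Function.injective_id, Sum.inr_injective⟩⟩

theorem skipN_injective : Function.Injective (skipN : _ → Stack k l m n) :=
  Sum.map_injective.2 ⟨Function.injective_id,
    Sum.map_injective.2 ⟨Function.injective_id, Sum.inl_injective⟩⟩

theorem skipL_embO (z : Fin k ⊕ Fin n) : skipL (embO z) = (outer z : Stack k l m n) := by
  cases z <;> rfl

theorem skipM_embO (z : Fin k ⊕ Fin n) : skipM (embO z) = (outer z : Stack k l m n) := by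
  cases z <;> rfl

theorem skipM_map_inl (z : Fin k ⊕ Fin l) :
    skipM (Sum.map id Sum.inl z) = (skipN (Sum.map id Sum.inl z) : Stack k l m n) := by
  cases z <;> rfl

theorem skipN_eq_skipL_iff {u : Fin k ⊕ (Fin l ⊕ Fin m)} {a : Fin k ⊕ (Fin m ⊕ Fin n)} :
    skipN u = skipL a ↔ ∃ x, embO x = u ∧ Sum.map id Sum.inl x = a := by
  constructor
  · rcases u with i | b | c <;> rcases a with i' | c' | d <;>
      simp [skipN, skipL, embO, eq_comm]
  · rintro ⟨x | x, rfl, rfl⟩ <;> rfl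

theorem skipK_eq_skipM_iff {u : Fin l ⊕ (Fin m ⊕ Fin n)} {a : Fin k ⊕ (Fin l ⊕ Fin n)} :
    skipK u = skipM a ↔ ∃ y, embO y = u ∧ Sum.inr y = a := by
  constructor
  · rcases u with b | c | d <;> rcases a with i | b' | d' <;>
      simp [skipK, skipM, embO, eq_comm]
  · rintro ⟨y | y, rfl, rfl⟩ <;> rfl

variable (f : BrauerDiagram k l) (g : BrauerDiagram l m) (h : BrauerDiagram m n)

def step3 : Stack k l m n → Stack k l m n → Prop :=
  Relation.Map (step f g) skipN skipN ⊔ Relation.Map (step g h) skipK skipK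

def conn3 : Stack k l m n → Stack k l m n → Prop := EqvGen (step3 f g h)

def componentsMeeting {α : Type*} (e : α → Stack k l m n) :
    Set (Quotient (EqvGen.setoid (step3 f g h))) :=
  Set.range fun a => Quotient.mk _ (e a)

variable {f g h} {gf : BrauerDiagram k m} {hg : BrauerDiagram l n}

theorem mk_notMem_componentsMeeting_iff {α : Type*} {e : α → Stack k l m n} {x : Stack k l m n} :
    Quotient.mk _ x ∉ componentsMeeting f g h e ↔ ∀ a, ¬ conn3 f g h x (e a) := by
  simp only [componentsMeeting, Set.mem_range, not_exists]
  exact forall_congr' fun a => not_congr ⟨fun hx => EqvGen.symm _ _ (Quotient.exact hx),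
    fun hx => Quotient.sound (EqvGen.symm _ _ hx)⟩

theorem componentsMeeting_skipL :
    componentsMeeting f g h skipL =
      componentsMeeting f g h mid₂ ∪ componentsMeeting f g h outer := by
  ext C
  simp only [componentsMeeting, Set.mem_union, Set.mem_range, Sum.exists]
  exact or_left_comm

theorem componentsMeeting_skipM :
    componentsMeeting f g h skipM =
      componentsMeeting f g h mid₁ ∪ componentsMeeting f g h outer := by
  ext C
  simp only [componentsMeeting, Set.mem_union, Set.mem_range, Sum.exists]
  exact or_left_comm

theorem step3_cases_skipL {x y : Stack k l m n} (hxy : step3 f g h x y) :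
    Relation.Map (step f g) skipN skipN x y ∨
      ∃ z, skipL (.inr z) = x ∧ skipL (.inr (h.τ z)) = y := by
  rcases hxy with hfg | ⟨u, v, ⟨z, rfl, rfl⟩ | ⟨z, rfl, rfl⟩, rfl, rfl⟩
  · exact .inl hfg
  · exact .inl ⟨.inr z, .inr (g.τ z), .inr ⟨z, rfl, rfl⟩, rfl, rfl⟩
  · exact .inr ⟨z, rfl, rfl⟩

theorem step3_cases_skipM {x y : Stack k l m n} (hxy : step3 f g h x y) :
    Relation.Map (step g h) skipK skipK x y ∨
      ∃ z, skipM (Sum.map id .inl z) = x ∧ skipM (Sum.map id .inl (f.τ z)) = y := by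
  rcases hxy with ⟨u, v, ⟨z, rfl, rfl⟩ | ⟨z, rfl, rfl⟩, rfl, rfl⟩ | hgh
  · exact .inr ⟨z, skipM_map_inl z, skipM_map_inl (f.τ z)⟩
  · exact .inl ⟨Sum.map id .inl z, Sum.map id .inl (g.τ z), .inl ⟨z, rfl, rfl⟩, rfl, rfl⟩
  · exact .inl hgh

theorem eqvGen_skipN_iff {u v : Fin k ⊕ (Fin l ⊕ Fin m)} :
    EqvGen (Relation.Map (step f g) skipN skipN) (skipN u) (skipN v : Stack k l m n) ↔
      conn f g u v :=
  eqvGen_map_apply_iff skipN_injective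

theorem eqvGen_skipK_iff {u v : Fin l ⊕ (Fin m ⊕ Fin n)} :
    EqvGen (Relation.Map (step g h) skipK skipK) (skipK u) (skipK v : Stack k l m n) ↔
      conn g h u v :=
  eqvGen_map_apply_iff skipK_injective

theorem conn3_skipL_of_step (hgf : IsComp f g gf) {a b : Fin k ⊕ (Fin m ⊕ Fin n)}
    (hab : step gf h a b) : conn3 f g h (skipL a) (skipL b) := by
  rcases hab with ⟨x, rfl, rfl⟩ | ⟨z, rfl, rfl⟩
  · have hfg := (eqvGen_skipN_iff (n := n)).2 ((hgf.1 x _).1 rfl).2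
    rw [(skipN_eq_skipL_iff (n := n)).2 ⟨x, rfl, rfl⟩,
      (skipN_eq_skipL_iff (n := n)).2 ⟨gf.τ x, rfl, rfl⟩] at hfg
    exact EqvGen.mono (fun _ _ => .inl) _ _ hfg
  · exact .rel _ _ (.inr ⟨.inr z, .inr (h.τ z), .inr ⟨z, rfl, rfl⟩, rfl, rfl⟩)

theorem conn3_skipM_of_step (hhg : IsComp g h hg) {a b : Fin k ⊕ (Fin l ⊕ Fin n)}
    (hab : step f hg a b) : conn3 f g h (skipM a) (skipM b) := by
  rcases hab with ⟨x, rfl, rfl⟩ | ⟨z, rfl, rfl⟩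
  · rw [skipM_map_inl, skipM_map_inl]
    exact .rel _ _ (.inl ⟨_, _, .inl ⟨x, rfl, rfl⟩, rfl, rfl⟩)
  · have hgh := (eqvGen_skipK_iff (k := k)).2 ((hhg.1 z _).1 rfl).2
    rw [(skipK_eq_skipM_iff (k := k)).2 ⟨z, rfl, rfl⟩,
      (skipK_eq_skipM_iff (k := k)).2 ⟨hg.τ z, rfl, rfl⟩] at hgh
    exact EqvGen.mono (fun _ _ => .inr) _ _ hgh

theorem conn_of_eqvGen_skipL (hgf : IsComp f g gf) {a b : Fin k ⊕ (Fin m ⊕ Fin n)}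
    (hab : EqvGen (Relation.Map (step f g) skipN skipN) (skipL a) (skipL b)) :
    conn gf h a b := by
  rcases (eqvGen_map_iff skipN_injective).1 hab with hab | ⟨u, v, hu, hv, huv⟩
  · exact skipL_injective hab ▸ .refl _
  · obtain ⟨x, rfl, rfl⟩ := skipN_eq_skipL_iff.1 hu
    obtain ⟨y, rfl, rfl⟩ := skipN_eq_skipL_iff.1 hv
    rcases hgf.eq_or_apply_eq huv with rfl | hxy
    exacts [.refl _, .rel _ _ (.inl ⟨x, rfl, by rw [hxy]⟩)]

theorem conn_of_eqvGen_skipM (hhg : IsComp g h hg) {a b : Fin k ⊕ (Fin l ⊕ Fin n)}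
    (hab : EqvGen (Relation.Map (step g h) skipK skipK) (skipM a) (skipM b)) :
    conn f hg a b := by
  rcases (eqvGen_map_iff skipK_injective).1 hab with hab | ⟨u, v, hu, hv, huv⟩
  · exact skipM_injective hab ▸ .refl _
  · obtain ⟨x, rfl, rfl⟩ := skipK_eq_skipM_iff.1 hu
    obtain ⟨y, rfl, rfl⟩ := skipK_eq_skipM_iff.1 hv
    rcases hhg.eq_or_apply_eq huv with rfl | hxy
    exacts [.refl _, .rel _ _ (.inr ⟨x, rfl, by rw [hxy]⟩)]

theorem conn_iff_conn3_skipL (hgf : IsComp f g gf) {a b : Fin k ⊕ (Fin m ⊕ Fin n)} :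
    conn gf h a b ↔ conn3 f g h (skipL a) (skipL b) :=
  (eqvGen_apply_iff_of_split (fun _ _ => conn3_skipL_of_step hgf)
    (fun _ _ hxy => (step3_cases_skipL hxy).imp_right
      fun ⟨z, hx, hy⟩ => ⟨_, _, hx, hy, .inr ⟨z, rfl, rfl⟩⟩)
    fun _ _ => conn_of_eqvGen_skipL hgf).symm

theorem conn_iff_conn3_skipM (hhg : IsComp g h hg) {a b : Fin k ⊕ (Fin l ⊕ Fin n)} :
    conn f hg a b ↔ conn3 f g h (skipM a) (skipM b) :=
  (eqvGen_apply_iff_of_split (fun _ _ => conn3_skipM_of_step hhg)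
    (fun _ _ hxy => (step3_cases_skipM hxy).imp_right
      fun ⟨z, hx, hy⟩ => ⟨_, _, hx, hy, .inl ⟨z, rfl, rfl⟩⟩)
    fun _ _ => conn_of_eqvGen_skipM hhg).symm

theorem not_eqvGen_mid₁_skipL {b : Fin l} (hb : IsClosedMid f g b) (a : Fin k ⊕ (Fin m ⊕ Fin n)) :
    ¬ EqvGen (Relation.Map (step f g) skipN skipN) (mid₁ b) (skipL a) := by
  intro hba
  rcases (eqvGen_map_iff skipN_injective).1 hba with hba | ⟨u, v, hu, hv, huv⟩
  · obtain ⟨x | x, hx, -⟩ := skipN_eq_skipL_iff.1 hba <;>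
      simp [embO] at hx
  · obtain rfl : u = .inr (.inl b) := skipN_injective hu
    obtain ⟨x, rfl, -⟩ := skipN_eq_skipL_iff.1 hv
    exact hb x huv

theorem not_eqvGen_mid₂_skipM {c : Fin m} (hc : IsClosedMid g h c) (a : Fin k ⊕ (Fin l ⊕ Fin n)) :
    ¬ EqvGen (Relation.Map (step g h) skipK skipK) (mid₂ c) (skipM a) := by
  intro hca
  rcases (eqvGen_map_iff skipK_injective).1 hca with hca | ⟨u, v, hu, hv, huv⟩
  · obtain ⟨y | y, hy, -⟩ := skipK_eq_skipM_iff.1 hca <;>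
      simp [embO] at hy
  · obtain rfl : u = .inr (.inl c) := skipK_injective hu
    obtain ⟨y, rfl, -⟩ := skipK_eq_skipM_iff.1 hv
    exact hc y huv

theorem conn3_mid₁_iff {b : Fin l} (hb : IsClosedMid f g b) {y : Stack k l m n} :
    conn3 f g h (mid₁ b) y ↔ EqvGen (Relation.Map (step f g) skipN skipN) (mid₁ b) y :=
  eqvGen_iff_of_isolated (V := (· ∈ Set.range skipL)) (fun _ _ => .inl)
    (fun _ _ hxy => (step3_cases_skipL hxy).imp_right fun ⟨_, hx, hy⟩ => ⟨⟨_, hx⟩, ⟨_, hy⟩⟩)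
    fun _ hy ⟨a, ha⟩ => not_eqvGen_mid₁_skipL hb a (ha ▸ hy)

theorem conn3_mid₂_iff {c : Fin m} (hc : IsClosedMid g h c) {y : Stack k l m n} :
    conn3 f g h (mid₂ c) y ↔ EqvGen (Relation.Map (step g h) skipK skipK) (mid₂ c) y :=
  eqvGen_iff_of_isolated (V := (· ∈ Set.range skipM)) (fun _ _ => .inr)
    (fun _ _ hxy => (step3_cases_skipM hxy).imp_right fun ⟨_, hx, hy⟩ => ⟨⟨_, hx⟩, ⟨_, hy⟩⟩)
    fun _ hy ⟨a, ha⟩ => not_eqvGen_mid₂_skipM hc a (ha ▸ hy)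

theorem newClosed_eq_ncard_left :
    newClosed f g = (componentsMeeting f g h mid₁ \
      (componentsMeeting f g h mid₂ ∪ componentsMeeting f g h outer)).ncard := by
  rw [← componentsMeeting_skipL]
  refine Setoid.card_quotient_comap_eq_ncard (fun b => ?_)
    fun b _ => ((conn3_mid₁_iff b.2).trans eqvGen_skipN_iff).symm
  rw [mk_notMem_componentsMeeting_iff]
  refine ⟨fun hb a hba => not_eqvGen_mid₁_skipL hb a ((conn3_mid₁_iff hb).1 hba),
    fun H z hz => H (Sum.map id .inl z) ?_⟩
  rw [← skipN_eq_skipL_iff.2 ⟨z, rfl, rfl⟩]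
  exact EqvGen.mono (fun _ _ => .inl) _ _ (eqvGen_skipN_iff.2 hz)

theorem newClosed_eq_ncard_right :
    newClosed g h = (componentsMeeting f g h mid₂ \
      (componentsMeeting f g h mid₁ ∪ componentsMeeting f g h outer)).ncard := by
  rw [← componentsMeeting_skipM]
  refine Setoid.card_quotient_comap_eq_ncard (fun c => ?_)
    fun c _ => ((conn3_mid₂_iff c.2).trans eqvGen_skipK_iff).symm
  rw [mk_notMem_componentsMeeting_iff]
  refine ⟨fun hc a hca => not_eqvGen_mid₂_skipM hc a ((conn3_mid₂_iff hc).1 hca),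
    fun H z hz => H (.inr z) ?_⟩
  rw [← skipK_eq_skipM_iff.2 ⟨z, rfl, rfl⟩]
  exact EqvGen.mono (fun _ _ => .inr) _ _ (eqvGen_skipK_iff.2 hz)

theorem newClosed_eq_ncard_comp_left (hgf : IsComp f g gf) :
    newClosed gf h = (componentsMeeting f g h mid₂ \ componentsMeeting f g h outer).ncard := by
  refine Setoid.card_quotient_comap_eq_ncard (fun c => ?_)
    fun _ _ => conn_iff_conn3_skipL hgf
  simp only [mk_notMem_componentsMeeting_iff, IsClosedMid, conn_iff_conn3_skipL hgf, skipL_embO]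
  rfl

theorem newClosed_eq_ncard_comp_right (hhg : IsComp g h hg) :
    newClosed f hg = (componentsMeeting f g h mid₁ \ componentsMeeting f g h outer).ncard := by
  refine Setoid.card_quotient_comap_eq_ncard (fun b => ?_)
    fun _ _ => conn_iff_conn3_skipM hhg
  simp only [mk_notMem_componentsMeeting_iff, IsClosedMid, conn_iff_conn3_skipM hhg, skipM_embO]
  rfl

theorem newClosed_add_newClosed_assoc (hgf : IsComp f g gf) (hhg : IsComp g h hg) :
    newClosed f g + newClosed gf h = newClosed g h + newClosed f hg := by
  rw [newClosed_eq_ncard_left (h := h), newClosed_eq_ncard_comp_left hgf,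
    newClosed_eq_ncard_right (f := f), newClosed_eq_ncard_comp_right hhg,
    Set.ncard_diff_union_add_ncard_diff, Set.ncard_diff_union_add_ncard_diff, Set.union_comm]

end BrauerDiagram

/-- Vertical composition of Brauer diagrams (specified by `IsComp`, whose
pairing is the composition pairing and whose closed-component count satisfies
`κ(g∘f) = κ(f) + κ(g) + k(τ_f, τ_g)`) is associative:
for `f : k → l`, `g : l → m`, `h : m → n`, one has `h ∘ (g ∘ f) = (h ∘ g) ∘ f`. -/
theorem brauer_comp_assoc {k l m n : ℕ}
    (f : BrauerDiagram k l) (g : BrauerDiagram l m) (h : BrauerDiagram m n)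
    (gf : BrauerDiagram k m) (hg : BrauerDiagram l n) (L R : BrauerDiagram k n)
    (hgf : IsComp f g gf) (hhg : IsComp g h hg)
    (hL : IsComp gf h L) (hR : IsComp f hg R) :
    L = R := by
  refine BrauerDiagram.ext (hL.τ_eq hR fun x y => ?_) ?_
  · rw [conn_iff_conn3_skipL hgf, conn_iff_conn3_skipM hhg, skipL_embO, skipL_embO,
      skipM_embO, skipM_embO]
  · rw [hL.2, hR.2, hgf.2, hhg.2]
    have hnew := newClosed_add_newClosed_assoc hgf hhg
    omega
end
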